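/- arXiv:2502.16226 — 2 statements merged into one kernel-verified Lean document; each statement's English description precedes it below -/
import Mathlib

section
/- Let w : [c,∞) → ℝ be continuous, positive, and nondecreasing with ∫_c^∞ 1/w(s) ds = ∞, and define G(z) = ∫_c^z 1/w(s) ds for z ≥ c. Suppose y : [0,∞) → [c,∞) is continuous and satisfies y(t) ≤ c + ∫₀^t y(s)·w(y(s)) ds for all t ≥ 0. Then y(t) ≤ G⁻¹(∫₀^t y(s) ds) for all t ≥ 0, where G⁻¹ denotes the inverse of G (which is a strictly increasing bijection from [c,∞) onto [0,∞)). -/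
/-!
Put `V(s) = c + ∫₀ˢ y·w(y)`, so that `y ≤ V` and `V' = y·w(y)`. Substituting `z = V(s)` gives
`G(V(t)) = ∫₀ᵗ y(s)·w(y(s)) / w(V(s)) ds ≤ ∫₀ᵗ y` because `w` is nondecreasing, and then
`y(t) ≤ V(t) = G⁻¹(G(V(t))) ≤ G⁻¹(∫₀ᵗ y)`. The comparison step works for any nonnegative kernel
`k` in place of the factor `y`.
-/

open MeasureTheory Filter Set

theorem hasDerivAt_integral_of_continuousOn {f : ℝ → ℝ} {a b x : ℝ}
    (hf : ContinuousOn f (Icc a b)) (hx : x ∈ Ioo a b) :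
    HasDerivAt (fun t => ∫ s in a..t, f s) (f x) x :=
  intervalIntegral.integral_hasDerivAt_right
    ((hf.mono (Icc_subset_Icc_right hx.2.le)).intervalIntegrable_of_Icc hx.1.le)
    ((hf.mono Ioo_subset_Icc_self).stronglyMeasurableAtFilter isOpen_Ioo x hx)
    (hf.continuousAt (Icc_mem_nhds hx.1 hx.2))

theorem integral_inv_le_integral_of_le_add_integral {w k y : ℝ → ℝ} {a b c : ℝ} (hab : a ≤ b)
    (hwcont : ContinuousOn w (Ici c)) (hwpos : ∀ z ≥ c, 0 < w z)
    (hwmono : MonotoneOn w (Ici c))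
    (hk : ContinuousOn k (Icc a b)) (hk0 : ∀ s ∈ Icc a b, 0 ≤ k s)
    (hy : ContinuousOn y (Icc a b)) (hyc : ∀ s ∈ Icc a b, c ≤ y s)
    (hineq : ∀ s ∈ Icc a b, y s ≤ c + ∫ r in a..s, k r * w (y r)) :
    ∫ z in c..c + ∫ r in a..b, k r * w (y r), (w z)⁻¹ ≤ ∫ r in a..b, k r := by
  set f : ℝ → ℝ := fun r => k r * w (y r)
  set V : ℝ → ℝ := fun s => c + ∫ r in a..s, f r
  have hf : ContinuousOn f (Icc a b) := hk.mul (hwcont.comp hy hyc)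
  have hV : ContinuousOn V (Icc a b) := by
    have := intervalIntegral.continuousOn_primitive_interval'
      (hf.intervalIntegrable_of_Icc (μ := volume) hab) left_mem_uIcc
    rw [uIcc_of_le hab] at this
    exact continuousOn_const.add this
  have hVc : MapsTo V (Icc a b) (Ici c) := fun s hs =>
    le_add_of_nonneg_right (intervalIntegral.integral_nonneg hs.1 fun r hr =>
      mul_nonneg (hk0 r ⟨hr.1, hr.2.trans hs.2⟩) (hwpos _ (hyc r ⟨hr.1, hr.2.trans hs.2⟩)).le)
  have hwinv : ContinuousOn (fun z => (w z)⁻¹) (Ici c) :=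
    hwcont.inv₀ fun z hz => (hwpos z hz).ne'
  have hsubst : ∫ s in a..b, (w (V s))⁻¹ * f s = ∫ z in c..V b, (w z)⁻¹ := by
    have := intervalIntegral.integral_comp_mul_deriv'' (g := fun z => (w z)⁻¹)
      (by rwa [uIcc_of_le hab])
      (fun x hx => by
        rw [min_eq_left hab, max_eq_right hab] at hx
        exact (((hasDerivAt_integral_of_continuousOn hf hx).const_add c).hasDerivWithinAt))
      (by rwa [uIcc_of_le hab]) (hwinv.mono (by rw [uIcc_of_le hab]; exact hVc.image_subset))
    simpa [V] using this
  calc ∫ z in c..V b, (w z)⁻¹ = ∫ s in a..b, (w (V s))⁻¹ * f s := hsubst.symm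
    _ ≤ ∫ r in a..b, k r := by
      refine intervalIntegral.integral_mono_on hab ?_ (hk.intervalIntegrable_of_Icc hab) ?_
      · exact ((hwinv.comp hV hVc).mul hf).intervalIntegrable_of_Icc hab
      intro s hs
      have hwV : 0 < w (V s) := hwpos _ (hVc hs)
      rw [inv_mul_le_iff₀ hwV, mul_comm]
      exact mul_le_mul_of_nonneg_left (hwmono (hyc s hs) (hVc hs) (hineq s hs)) (hk0 s hs)

theorem bihari_gronwall_general (c : ℝ) (hc : 0 < c) (w : ℝ → ℝ)
    (hwcont : ContinuousOn w (Ici c))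
    (hwpos : ∀ z ≥ c, 0 < w z)
    (hwmono : MonotoneOn w (Ici c))
    (G : ℝ → ℝ) (hG : ∀ z, G z = ∫ s in c..z, (w s)⁻¹)
    (Ginv : ℝ → ℝ)
    (hGinv_left : ∀ z ≥ c, Ginv (G z) = z)
    (hGinvmono : StrictMonoOn Ginv (Ici (0:ℝ)))
    (y : ℝ → ℝ) (hyc : Continuous y) (hyge : ∀ t ≥ (0:ℝ), c ≤ y t)
    (hineq : ∀ t ≥ (0:ℝ), y t ≤ c + ∫ s in (0:ℝ)..t, y s * w (y s)) :
    ∀ t ≥ (0:ℝ), y t ≤ Ginv (∫ s in (0:ℝ)..t, y s) := by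
  intro t ht
  set V := c + ∫ s in (0:ℝ)..t, y s * w (y s)
  have hVc : c ≤ V := (hyge t ht).trans (hineq t ht)
  have hGV : G V ≤ ∫ s in (0:ℝ)..t, y s := by
    rw [hG]
    exact integral_inv_le_integral_of_le_add_integral ht hwcont hwpos hwmono
      hyc.continuousOn (fun s hs => (hc.trans_le (hyge s hs.1)).le) hyc.continuousOn
      (fun s hs => hyge s hs.1) (fun s hs => hineq s hs.1)
  have hGV0 : 0 ≤ G V := by
    rw [hG]
    exact intervalIntegral.integral_nonneg hVc fun z hz => (inv_pos.mpr (hwpos z hz.1)).le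
  calc y t ≤ V := hineq t ht
    _ = Ginv (G V) := (hGinv_left V hVc).symm
    _ ≤ Ginv (∫ s in (0:ℝ)..t, y s) := hGinvmono.monotoneOn hGV0 (hGV0.trans hGV) hGV

/-- Nonlinear Grönwall–Bihari inequality: if `y(t) ≤ c + ∫₀ᵗ y·w(y)` with `w`
continuous, positive, nondecreasing on `[c,∞)` and `G(z) = ∫_c^z 1/w(s) ds`
diverging at infinity (so that its inverse `Ginv` is defined on `[0,∞)`), then
`y(t) ≤ G⁻¹(∫₀ᵗ y(s) ds)`. -/
theorem bihari_gronwall (c : ℝ) (hc : 0 < c) (w : ℝ → ℝ)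
    (hwcont : ContinuousOn w (Ici c))
    (hwpos : ∀ z ≥ c, 0 < w z)
    (hwmono : MonotoneOn w (Ici c))
    (G : ℝ → ℝ) (hG : ∀ z, G z = ∫ s in c..z, (w s)⁻¹)
    (hGdiv : Tendsto G atTop atTop)
    (Ginv : ℝ → ℝ)
    (hGinv_left : ∀ z ≥ c, Ginv (G z) = z)
    (hGinv_right : ∀ x ≥ (0:ℝ), G (Ginv x) = x ∧ c ≤ Ginv x)
    (hGinvmono : StrictMonoOn Ginv (Ici (0:ℝ)))
    (y : ℝ → ℝ) (hyc : Continuous y) (hyge : ∀ t ≥ (0:ℝ), c ≤ y t)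
    (hineq : ∀ t ≥ (0:ℝ), y t ≤ c + ∫ s in (0:ℝ)..t, y s * w (y s)) :
    ∀ t ≥ (0:ℝ), y t ≤ Ginv (∫ s in (0:ℝ)..t, y s) :=
  bihari_gronwall_general c hc w hwcont hwpos hwmono G hG Ginv hGinv_left hGinvmono y hyc hyge hineq
end

section
/- Let 0 < a < b, Ω the annulus {a² < x²+y² < b²}, and let u : closure Ω → ℝ be C¹. Then for every p ∈ [1,∞) there is a constant C (depending only on a, b, p) such that ∫_Ω |u|^p dx dy ≤ C·(∫_{∂B(0,b)} |u|^p ds + ∫_Ω |∇u|^p dx dy), where the boundary integral is over the outer circle of radius b with respect to arc length. -/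
/-!
Along each ray `r ↦ (r cos θ, r sin θ)` the fundamental theorem of calculus bounds `|u|` at
radius `r` by its value on the outer circle plus the integral of `‖Du‖` along the ray, and
Jensen's inequality turns this into a bound on `|u|ᵖ` by `|u|ᵖ` on the circle plus the integral
of `‖Du‖ᵖ` along the ray. Integrating over the rays in polar coordinates, where the Jacobian `r`
lies between `a` and `b`, gives the inequality. Compactness of the closed annulus makes `u` and
`Du` bounded, which provides all the integrability.
-/

open MeasureTheory Set Real Filter Topology

/-- Near each point of `s`, `u` has a derivative within `s` that is continuous, hence locally
bounded; on the open set `A` it coincides with `fderiv`, and compactness of `s` globalizes. -/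
theorem ContDiffOn.bddAbove_norm_fderiv {𝕜 E F : Type*} [NontriviallyNormedField 𝕜]
    [NormedAddCommGroup E] [NormedSpace 𝕜 E] [NormedAddCommGroup F] [NormedSpace 𝕜 F]
    {u : E → F} {s A : Set E} (hu : ContDiffOn 𝕜 1 u s) (hs : IsCompact s) (hA : IsOpen A)
    (hAs : A ⊆ s) : BddAbove ((‖fderiv 𝕜 u ·‖) '' A) := by
  rw [← inter_eq_right.2 hAs]
  refine hs.induction_on (p := fun t ↦ BddAbove ((‖fderiv 𝕜 u ·‖) '' (t ∩ A))) (by simp)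
    (fun _ _ hst ht ↦ ht.mono (image_mono (inter_subset_inter_left _ hst)))
    (fun _ _ hs ht ↦ by rw [union_inter_distrib_right, image_union]; exact hs.union ht)
    ?_
  intro x hx
  obtain ⟨v, hv, -, f', hf', hf'x⟩ :=
    (contDiffWithinAt_succ_iff_hasFDerivWithinAt (n := 0) (by simp)).1 (by simpa using hu x hx)
  rw [insert_eq_of_mem hx] at hv
  obtain ⟨w, hw, hxw, hwv⟩ := mem_nhdsWithin.1 hv
  have hbound : ∀ᶠ y in 𝓝[s] x, ‖f' y‖ < ‖f' x‖ + 1 :=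
    nhdsWithin_le_of_mem hv <| hf'x.continuousWithinAt.norm.eventually_lt
      tendsto_const_nhds (lt_add_one _)
  refine ⟨_, inter_mem (mem_nhdsWithin_of_mem_nhds (hw.mem_nhds hxw)) hbound, ‖f' x‖ + 1, ?_⟩
  rintro _ ⟨y, ⟨⟨hyw, hy⟩, hyA⟩, rfl⟩
  have hvy : v ∈ 𝓝 y := mem_of_superset ((hw.inter hA).mem_nhds ⟨hyw, hyA⟩)
    fun z hz ↦ hwv ⟨hz.1, hAs hz.2⟩
  simpa only [((hf' y (mem_of_mem_nhds hvy)).hasFDerivAt hvy).fderiv] using hy.le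

theorem abs_le_abs_add_integral_of_hasDerivAt {f f' g : ℝ → ℝ} {r b : ℝ} (hrb : r ≤ b)
    (hf : ContinuousOn f (Icc r b)) (hderiv : ∀ s ∈ Ioo r b, HasDerivAt f (f' s) s)
    (hf' : AEStronglyMeasurable f' (volume.restrict (Ioo r b)))
    (hf'g : ∀ s ∈ Ioo r b, |f' s| ≤ g s) (hg : IntegrableOn g (Ioo r b)) :
    |f r| ≤ |f b| + ∫ s in Ioo r b, g s := by
  have hf'int : IntegrableOn f' (Ioo r b) :=
    hg.mono' hf' ((ae_restrict_iff' measurableSet_Ioo).2 (.of_forall hf'g))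
  have hftc : ∫ s in Ioo r b, f' s = f b - f r := by
    rw [← integral_Ioc_eq_integral_Ioo, ← intervalIntegral.integral_of_le hrb]
    exact intervalIntegral.integral_eq_sub_of_hasDerivAt_of_le hrb hf hderiv
      ((intervalIntegrable_iff_integrableOn_Ioo_of_le hrb).2 hf'int)
  have hint_le : |∫ s in Ioo r b, f' s| ≤ ∫ s in Ioo r b, g s :=
    (abs_integral_le_integral_abs).trans
      (setIntegral_mono_on hf'int.abs hg measurableSet_Ioo hf'g)
  rw [hftc] at hint_le
  linarith [abs_sub_abs_le_abs_sub (f r) (f b), abs_sub_comm (f b) (f r)]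

theorem add_rpow_le_two_rpow_mul {x y p : ℝ} (hx : 0 ≤ x) (hy : 0 ≤ y) (hp : 1 ≤ p) :
    (x + y) ^ p ≤ 2 ^ (p - 1) * (x ^ p + y ^ p) := by
  lift x to NNReal using hx
  lift y to NNReal using hy
  exact_mod_cast NNReal.rpow_add_le_mul_rpow_add_rpow x y hp

theorem rpow_integral_le_mul_integral_rpow {α : Type*} [MeasurableSpace α] {μ : Measure α}
    [IsFiniteMeasure μ] {f : α → ℝ} {p : ℝ} (hp : 1 ≤ p) (hf0 : 0 ≤ᵐ[μ] f)
    (hf : Integrable f μ) (hfp : Integrable (fun x ↦ f x ^ p) μ) :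
    (∫ x, f x ∂μ) ^ p ≤ μ.real univ ^ (p - 1) * ∫ x, f x ^ p ∂μ := by
  rcases eq_zero_or_neZero μ with rfl | hμ
  · simp [zero_rpow (by linarith : p ≠ 0)]
  have hm : 0 < μ.real univ := measureReal_univ_pos
  have hjensen : (⨍ x, f x ∂μ) ^ p ≤ ⨍ x, f x ^ p ∂μ :=
    (convexOn_rpow hp).map_average_le (continuousOn_id.rpow_const fun _ _ ↦ Or.inr (by linarith))
      isClosed_Ici hf0 hf hfp
  rw [average_eq, average_eq, smul_eq_mul, smul_eq_mul,
    mul_rpow (inv_nonneg.2 hm.le) (integral_nonneg_of_ae hf0)] at hjensen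
  calc (∫ x, f x ∂μ) ^ p = μ.real univ ^ p * ((μ.real univ)⁻¹ ^ p * (∫ x, f x ∂μ) ^ p) := by
        rw [← mul_assoc, ← mul_rpow hm.le (inv_nonneg.2 hm.le), mul_inv_cancel₀ hm.ne', one_rpow,
          one_mul]
    _ ≤ μ.real univ ^ p * ((μ.real univ)⁻¹ * ∫ x, f x ^ p ∂μ) := by gcongr
    _ = μ.real univ ^ (p - 1) * ∫ x, f x ^ p ∂μ := by
        rw [← mul_assoc, rpow_sub_one hm.ne', div_eq_mul_inv]

theorem rpow_le_of_le_add_setIntegral {ψ : ℝ → ℝ} {a b p x y : ℝ} (hab : a ≤ b) (hp : 1 ≤ p)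
    (hx : 0 ≤ x) (hy : 0 ≤ y) (hψ0 : ∀ s ∈ Ioo a b, 0 ≤ ψ s) (hψ : IntegrableOn ψ (Ioo a b))
    (hψp : IntegrableOn (fun s ↦ ψ s ^ p) (Ioo a b)) (h : x ≤ y + ∫ s in Ioo a b, ψ s) :
    x ^ p ≤ 2 ^ (p - 1) * (y ^ p + (b - a) ^ (p - 1) * ∫ s in Ioo a b, ψ s ^ p) := by
  have hψ0' : 0 ≤ᵐ[volume.restrict (Ioo a b)] ψ :=
    (ae_restrict_iff' measurableSet_Ioo).2 (.of_forall hψ0)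
  have hjensen := rpow_integral_le_mul_integral_rpow hp hψ0' hψ hψp
  rw [measureReal_restrict_apply_univ, Real.volume_real_Ioo_of_le hab] at hjensen
  calc x ^ p ≤ (y + ∫ s in Ioo a b, ψ s) ^ p := rpow_le_rpow hx h (by linarith)
    _ ≤ 2 ^ (p - 1) * (y ^ p + (∫ s in Ioo a b, ψ s) ^ p) :=
      add_rpow_le_two_rpow_mul hy (integral_nonneg_of_ae hψ0') hp
    _ ≤ _ := by gcongr

theorem mul_setIntegral_le_setIntegral_mul {g : ℝ → ℝ} {a b : ℝ}
    (hg0 : ∀ s ∈ Ioo a b, 0 ≤ g s) (hg : IntegrableOn g (Ioo a b))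
    (hsg : IntegrableOn (fun s ↦ s * g s) (Ioo a b)) :
    a * ∫ s in Ioo a b, g s ≤ ∫ s in Ioo a b, s * g s := by
  rw [← integral_const_mul]
  exact setIntegral_mono_on (hg.const_mul a) hsg measurableSet_Ioo fun s hs ↦
    mul_le_mul_of_nonneg_right hs.1.le (hg0 s hs)

theorem setIntegral_mul_abs_rpow_le {φ ψ : ℝ → ℝ} {a b p M : ℝ} (ha : 0 < a) (hab : a < b)
    (hp : 1 ≤ p) (hψ : AEStronglyMeasurable ψ (volume.restrict (Ioo a b)))
    (hψ0 : ∀ s ∈ Ioo a b, 0 ≤ ψ s) (hψM : ∀ s ∈ Ioo a b, ψ s ≤ M)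
    (hφ : ∀ r ∈ Ioo a b, |φ r| ≤ |φ b| + ∫ s in Ioo a b, ψ s) :
    ∫ r in Ioo a b, r * |φ r| ^ p ≤ 2 ^ (p - 1) * ((b - a) + b / a * (b - a) ^ p) *
      (|φ b| ^ p * b + ∫ s in Ioo a b, s * ψ s ^ p) := by
  have hb : 0 < b := ha.trans hab
  have hba : 0 < b - a := sub_pos.2 hab
  have hae : ∀ {P : ℝ → Prop}, (∀ s ∈ Ioo a b, P s) → ∀ᵐ s ∂volume.restrict (Ioo a b), P s :=
    fun h ↦ (ae_restrict_iff' measurableSet_Ioo).2 (.of_forall h)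
  have hψint : IntegrableOn ψ (Ioo a b) := Integrable.of_bound hψ M <| hae fun s hs ↦ by
    rw [norm_of_nonneg (hψ0 s hs)]; exact hψM s hs
  have hψpint : IntegrableOn (fun s ↦ ψ s ^ p) (Ioo a b) :=
    Integrable.of_bound (hψ.aemeasurable.pow_const p).aestronglyMeasurable (M ^ p) <|
      hae fun s hs ↦ by
        rw [norm_of_nonneg (rpow_nonneg (hψ0 s hs) p)]
        exact rpow_le_rpow (hψ0 s hs) (hψM s hs) (by linarith)
  have hsψpint : IntegrableOn (fun s ↦ s * ψ s ^ p) (Ioo a b) :=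
    hψpint.bdd_mul aestronglyMeasurable_id <| hae fun s hs ↦ by
      rw [norm_of_nonneg (ha.trans hs.1).le]; exact hs.2.le
  set Jp := ∫ s in Ioo a b, ψ s ^ p
  set W := ∫ s in Ioo a b, s * ψ s ^ p
  have hweight : b * Jp ≤ b / a * W := by
    rw [div_mul_eq_mul_div, le_div_iff₀ ha]
    nlinarith [mul_setIntegral_le_setIntegral_mul (fun s hs ↦ rpow_nonneg (hψ0 s hs) p)
      hψpint hsψpint]
  have hpointwise : ∀ r ∈ Ioo a b,
      r * |φ r| ^ p ≤ b * (2 ^ (p - 1) * (|φ b| ^ p + (b - a) ^ (p - 1) * Jp)) := fun r hr ↦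
    mul_le_mul hr.2.le (rpow_le_of_le_add_setIntegral hab.le hp (abs_nonneg _) (abs_nonneg _)
      hψ0 hψint hψpint (hφ r hr)) (rpow_nonneg (abs_nonneg _) p) hb.le
  have hW0 : 0 ≤ W := setIntegral_nonneg_of_ae_restrict (hae fun s hs ↦
    mul_nonneg (ha.trans hs.1).le (rpow_nonneg (hψ0 s hs) p))
  have hpow : (b - a) ^ (p - 1) * (b - a) = (b - a) ^ p := by
    rw [rpow_sub_one hba.ne', div_mul_cancel₀ _ hba.ne']
  calc ∫ r in Ioo a b, r * |φ r| ^ p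
      ≤ ∫ r in Ioo a b, b * (2 ^ (p - 1) * (|φ b| ^ p + (b - a) ^ (p - 1) * Jp)) :=
        integral_mono_of_nonneg (hae fun r hr ↦ mul_nonneg (ha.trans hr.1).le
          (rpow_nonneg (abs_nonneg _) p)) (integrableOn_const measure_Ioo_lt_top.ne)
          (hae hpointwise)
    _ = 2 ^ (p - 1) * (b - a) * (|φ b| ^ p * b) + 2 ^ (p - 1) * (b - a) ^ p * (b * Jp) := by
        rw [setIntegral_const, Real.volume_real_Ioo_of_le hab.le, smul_eq_mul, ← hpow]
        ring
    _ ≤ _ := by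
        have hK : 0 ≤ 2 ^ (p - 1) * (b - a) ^ p := by positivity
        have hboundary : 0 ≤ 2 ^ (p - 1) * (b / a * (b - a) ^ p) * (|φ b| ^ p * b) := by
          positivity
        nlinarith [mul_le_mul_of_nonneg_left hweight hK,
          mul_nonneg (by positivity : (0 : ℝ) ≤ 2 ^ (p - 1) * (b - a)) hW0]

theorem MeasureTheory.setIntegral_prod_symm {α β E : Type*} [MeasurableSpace α] [MeasurableSpace β]
    [NormedAddCommGroup E] [NormedSpace ℝ E] {μ : Measure α} {ν : Measure β} [SFinite μ]
    [SFinite ν] {s : Set α} {t : Set β} (f : α × β → E) (hf : IntegrableOn f (s ×ˢ t) (μ.prod ν)) :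
    ∫ z in s ×ˢ t, f z ∂μ.prod ν = ∫ y in t, ∫ x in s, f (x, y) ∂μ ∂ν := by
  rw [IntegrableOn, ← Measure.prod_restrict] at hf
  rw [← Measure.prod_restrict, integral_prod_symm f hf]

theorem MeasureTheory.IntegrableOn.setIntegral_prod_right {α β E : Type*} [MeasurableSpace α]
    [MeasurableSpace β] [NormedAddCommGroup E] [NormedSpace ℝ E] {μ : Measure α} {ν : Measure β}
    [SFinite μ] [SFinite ν] {s : Set α} {t : Set β} {f : α × β → E}
    (hf : IntegrableOn f (s ×ˢ t) (μ.prod ν)) :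
    IntegrableOn (fun y ↦ ∫ x in s, f (x, y) ∂μ) t ν := by
  rw [IntegrableOn, ← Measure.prod_restrict] at hf
  exact hf.integral_prod_right

def annulus (a b : ℝ) : Set (ℝ × ℝ) :=
  {q | a ^ 2 < q.1 ^ 2 + q.2 ^ 2 ∧ q.1 ^ 2 + q.2 ^ 2 < b ^ 2}

section annulus

variable {a b : ℝ}

theorem isOpen_annulus : IsOpen (annulus a b) := by
  have : Continuous fun q : ℝ × ℝ ↦ q.1 ^ 2 + q.2 ^ 2 := by fun_prop
  exact (isOpen_lt continuous_const this).inter (isOpen_lt this continuous_const)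

theorem isCompact_closure_annulus : IsCompact (closure (annulus a b)) := by
  refine (Metric.isBounded_iff_subset_closedBall 0).2 ⟨|b|, ?_⟩ |>.isCompact_closure
  rintro ⟨x, y⟩ ⟨-, h⟩
  simp only [Metric.mem_closedBall, dist_zero_right, Prod.norm_def, Real.norm_eq_abs,
    sup_le_iff]
  exact ⟨sq_le_sq.1 (by nlinarith), sq_le_sq.1 (by nlinarith)⟩

theorem polar_mem_annulus_iff (ha : 0 ≤ a) (hb : 0 ≤ b) {r : ℝ} (hr : 0 ≤ r) (θ : ℝ) :
    (r * cos θ, r * sin θ) ∈ annulus a b ↔ r ∈ Ioo a b := by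
  have hsq : (r * cos θ) ^ 2 + (r * sin θ) ^ 2 = r ^ 2 := by
    linear_combination r ^ 2 * sin_sq_add_cos_sq θ
  simp only [annulus, mem_ofPred_eq, hsq, mem_Ioo, sq_lt_sq₀ ha hr, sq_lt_sq₀ hr hb]

theorem polar_mem_closure_annulus (ha : 0 ≤ a) (hab : a < b) {r : ℝ} (hr : r ∈ Icc a b)
    (θ : ℝ) : (r * cos θ, r * sin θ) ∈ closure (annulus a b) := by
  have hcont : Continuous fun s : ℝ ↦ (s * cos θ, s * sin θ) := by fun_prop
  refine closure_mono (s := (fun s : ℝ ↦ (s * cos θ, s * sin θ)) '' Ioo a b) ?_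
    (image_closure_subset_closure_image hcont ⟨r, ?_, rfl⟩)
  · rintro _ ⟨s, hs, rfl⟩
    exact (polar_mem_annulus_iff ha (ha.trans hab.le) (ha.trans hs.1.le) θ).2 hs
  · rwa [closure_Ioo hab.ne]

theorem setIntegral_annulus_eq_setIntegral_polar {E : Type*} [NormedAddCommGroup E]
    [NormedSpace ℝ E] (ha : 0 ≤ a) (hb : 0 ≤ b) (f : ℝ × ℝ → E) :
    ∫ q in annulus a b, f q =
      ∫ z in Ioo a b ×ˢ Ioo (-π) π, z.1 • f (z.1 * cos z.2, z.1 * sin z.2) := by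
  have hsub : Ioo a b ×ˢ Ioo (-π) π ⊆ polarCoord.target :=
    prod_mono (fun r hr ↦ ha.trans_lt hr.1) subset_rfl
  have hcongr : EqOn (fun z ↦ z.1 • (annulus a b).indicator f (polarCoord.symm z))
      ((Ioo a b ×ˢ Ioo (-π) π).indicator fun z ↦ z.1 • f (z.1 * cos z.2, z.1 * sin z.2))
      polarCoord.target := by
    rintro ⟨r, θ⟩ ⟨hr, hθ⟩
    have hmem := polar_mem_annulus_iff ha hb (le_of_lt (show 0 < r from hr)) θ
    simp only [polarCoord_symm_apply]
    by_cases hr' : r ∈ Ioo a b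
    · rw [indicator_of_mem (hmem.2 hr'), indicator_of_mem (mk_mem_prod hr' hθ)]
    · rw [indicator_of_notMem (mt hmem.1 hr'), indicator_of_notMem (fun h ↦ hr' h.1), smul_zero]
  rw [← integral_indicator isOpen_annulus.measurableSet, ← integral_comp_polarCoord_symm,
    setIntegral_congr_fun polarCoord.open_target.measurableSet hcongr,
    setIntegral_indicator (measurableSet_Ioo.prod measurableSet_Ioo), inter_eq_right.2 hsub]

theorem setIntegral_annulus_eq_integral_integral_polar {E : Type*} [NormedAddCommGroup E]
    [NormedSpace ℝ E] (ha : 0 ≤ a) (hb : 0 ≤ b) {f : ℝ × ℝ → E}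
    (hf : IntegrableOn (fun z : ℝ × ℝ ↦ z.1 • f (z.1 * cos z.2, z.1 * sin z.2))
      (Ioo a b ×ˢ Ioo (-π) π)) :
    ∫ q in annulus a b, f q =
      ∫ θ in Ioo (-π) π, ∫ r in Ioo a b, r • f (r * cos θ, r * sin θ) := by
  rw [setIntegral_annulus_eq_setIntegral_polar ha hb, Measure.volume_eq_prod,
    setIntegral_prod_symm _ hf]

theorem integrableOn_polar_of_continuousOn {E : Type*} [NormedAddCommGroup E] [NormedSpace ℝ E]
    (ha : 0 ≤ a) (hab : a < b) {f : ℝ × ℝ → E} (hf : ContinuousOn f (closure (annulus a b))) :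
    IntegrableOn (fun z : ℝ × ℝ ↦ z.1 • f (z.1 * cos z.2, z.1 * sin z.2))
      (Ioo a b ×ˢ Ioo (-π) π) := by
  refine ContinuousOn.integrableOn_compact (isCompact_Icc.prod isCompact_Icc) ?_
    |>.mono_set (prod_mono Ioo_subset_Icc_self Ioo_subset_Icc_self)
  exact continuousOn_fst.smul <| hf.comp (by fun_prop) fun z hz ↦
    polar_mem_closure_annulus ha hab hz.1 z.2

theorem integrableOn_polar_of_norm_le {E : Type*} [NormedAddCommGroup E] [NormedSpace ℝ E]
    (ha : 0 ≤ a) (hb : 0 ≤ b) {f : ℝ × ℝ → E} (hf : StronglyMeasurable f) {M : ℝ}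
    (hM : ∀ q ∈ annulus a b, ‖f q‖ ≤ M) :
    IntegrableOn (fun z : ℝ × ℝ ↦ z.1 • f (z.1 * cos z.2, z.1 * sin z.2))
      (Ioo a b ×ˢ Ioo (-π) π) := by
  refine Measure.integrableOn_of_bounded (M := b * M)
    ((Metric.isBounded_Ioo a b).prod (Metric.isBounded_Ioo _ _)).measure_lt_top.ne
    (measurable_fst.stronglyMeasurable.smul (hf.comp_measurable (by fun_prop))).aestronglyMeasurable
    ((ae_restrict_iff' (measurableSet_Ioo.prod measurableSet_Ioo)).2 (.of_forall fun z hz ↦ ?_))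
  have hr : 0 ≤ z.1 := ha.trans hz.1.1.le
  rw [norm_smul, norm_of_nonneg hr]
  exact mul_le_mul hz.1.2.le (hM _ ((polar_mem_annulus_iff ha hb hr z.2).2 hz.1))
    (norm_nonneg _) hb

theorem setIntegral_Ioo_neg_pi_pi_polar_eq_intervalIntegral {E : Type*} [NormedAddCommGroup E]
    [NormedSpace ℝ E] (f : ℝ × ℝ → E) (r : ℝ) :
    ∫ θ in Ioo (-π) π, f (r * cos θ, r * sin θ) =
      ∫ θ in (0)..(2 * π), f (r * cos θ, r * sin θ) := by
  have hperiodic : Function.Periodic (fun θ ↦ f (r * cos θ, r * sin θ)) (2 * π) := fun θ ↦ by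
    simp only [cos_add_two_pi, sin_add_two_pi]
  have h := hperiodic.intervalIntegral_add_eq (-π) 0
  rw [zero_add, show -π + 2 * π = π by ring] at h
  rw [← integral_Ioc_eq_integral_Ioo, ← intervalIntegral.integral_of_le (by linarith [pi_pos]), h]

theorem abs_le_abs_add_integral_norm_fderiv {u : ℝ × ℝ → ℝ} (ha : 0 ≤ a) (hab : a < b)
    (hu : ContDiffOn ℝ 1 u (closure (annulus a b))) (θ : ℝ)
    (hDu : IntegrableOn (fun s ↦ ‖fderiv ℝ u (s * cos θ, s * sin θ)‖) (Ioo a b)) {r : ℝ}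
    (hr : r ∈ Ioo a b) :
    |u (r * cos θ, r * sin θ)| ≤
      |u (b * cos θ, b * sin θ)| + ∫ s in Ioo a b, ‖fderiv ℝ u (s * cos θ, s * sin θ)‖ := by
  have hray : ∀ s, HasDerivAt (fun s : ℝ ↦ (s * cos θ, s * sin θ)) (cos θ, sin θ) s := fun s ↦ by
    simpa using ((hasDerivAt_id s).mul_const (cos θ)).prodMk ((hasDerivAt_id s).mul_const (sin θ))
  have hunit : ‖((cos θ, sin θ) : ℝ × ℝ)‖ ≤ 1 := by
    simpa [Prod.norm_def] using ⟨abs_cos_le_one θ, abs_sin_le_one θ⟩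
  have hsub : Ioo r b ⊆ Ioo a b := Ioo_subset_Ioo_left hr.1.le
  refine (abs_le_abs_add_integral_of_hasDerivAt hr.2.le
    (f := fun s ↦ u (s * cos θ, s * sin θ))
    (f' := fun s ↦ fderiv ℝ u (s * cos θ, s * sin θ) (cos θ, sin θ)) ?_ ?_ ?_ ?_
    (hDu.mono_set hsub)).trans (add_le_add le_rfl ?_)
  · refine hu.continuousOn.comp (by fun_prop) fun s hs ↦ ?_
    exact polar_mem_closure_annulus ha hab ⟨hr.1.le.trans hs.1, hs.2⟩ θ
  · intro s hs
    have hmem : (s * cos θ, s * sin θ) ∈ annulus a b :=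
      (polar_mem_annulus_iff ha (ha.trans hab.le) (ha.trans hr.1.le |>.trans hs.1.le) θ).2
        (hsub hs)
    have hdiff : DifferentiableAt ℝ u (s * cos θ, s * sin θ) :=
      (hu.contDiffAt (mem_of_superset (isOpen_annulus.mem_nhds hmem) subset_closure))
        |>.differentiableAt one_ne_zero
    exact hdiff.hasFDerivAt.comp_hasDerivAt s (hray s)
  · exact ((measurable_fderiv_apply_const ℝ u _).comp (by fun_prop)).aestronglyMeasurable
  · intro s _
    simpa using (fderiv ℝ u (s * cos θ, s * sin θ)).le_opNorm_of_le hunit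
  · exact setIntegral_mono_set hDu (.of_forall fun _ ↦ norm_nonneg _) hsub.eventuallyLE

theorem setIntegral_mul_abs_rpow_polar_le {u : ℝ × ℝ → ℝ} {p M : ℝ} (ha : 0 < a) (hab : a < b)
    (hp : 1 ≤ p) (hu : ContDiffOn ℝ 1 u (closure (annulus a b)))
    (hM : ∀ q ∈ annulus a b, ‖fderiv ℝ u q‖ ≤ M) (θ : ℝ) :
    ∫ r in Ioo a b, r * |u (r * cos θ, r * sin θ)| ^ p ≤
      2 ^ (p - 1) * ((b - a) + b / a * (b - a) ^ p) * (|u (b * cos θ, b * sin θ)| ^ p * b +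
        ∫ r in Ioo a b, r * ‖fderiv ℝ u (r * cos θ, r * sin θ)‖ ^ p) := by
  have hMray : ∀ s ∈ Ioo a b, ‖fderiv ℝ u (s * cos θ, s * sin θ)‖ ≤ M := fun s hs ↦
    hM _ ((polar_mem_annulus_iff ha.le (ha.trans hab).le (ha.trans hs.1).le θ).2 hs)
  have hmeas : Measurable fun s : ℝ ↦ ‖fderiv ℝ u (s * cos θ, s * sin θ)‖ :=
    (measurable_fderiv ℝ u).norm.comp (by fun_prop)
  have hint : IntegrableOn (fun s ↦ ‖fderiv ℝ u (s * cos θ, s * sin θ)‖) (Ioo a b) :=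
    Measure.integrableOn_of_bounded measure_Ioo_lt_top.ne hmeas.aestronglyMeasurable
      ((ae_restrict_iff' measurableSet_Ioo).2 (.of_forall fun s hs ↦ by
        rw [norm_norm]; exact hMray s hs))
  exact setIntegral_mul_abs_rpow_le ha hab hp hmeas.aestronglyMeasurable
    (fun _ _ ↦ norm_nonneg _) hMray
    fun r hr ↦ abs_le_abs_add_integral_norm_fderiv ha.le hab hu θ hint hr

end annulus

/-- Poincaré inequality with boundary control on the annulus
`Ω = {a² < x²+y² < b²}`: the `L^p` norm of `u` is controlled by the `L^p` norm
of its gradient plus the `L^p` norm of its trace on the outer circle (written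
via the arc-length parametrization `θ ↦ (b cos θ, b sin θ)`). -/
theorem poincare_annulus_boundary (a b : ℝ) (ha : 0 < a) (hab : a < b)
    (p : ℝ) (hp : 1 ≤ p) :
    ∃ C > (0:ℝ), ∀ u : ℝ × ℝ → ℝ,
      ContDiffOn ℝ 1 u
        (closure {q : ℝ × ℝ | a ^ 2 < q.1 ^ 2 + q.2 ^ 2 ∧ q.1 ^ 2 + q.2 ^ 2 < b ^ 2}) →
      ∫ q in {q : ℝ × ℝ | a ^ 2 < q.1 ^ 2 + q.2 ^ 2 ∧ q.1 ^ 2 + q.2 ^ 2 < b ^ 2},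
          |u q| ^ p
        ≤ C * ((∫ θ in (0:ℝ)..(2 * π), |u (b * Real.cos θ, b * Real.sin θ)| ^ p * b)
            + ∫ q in {q : ℝ × ℝ | a ^ 2 < q.1 ^ 2 + q.2 ^ 2 ∧ q.1 ^ 2 + q.2 ^ 2 < b ^ 2},
                ‖fderiv ℝ u q‖ ^ p) := by
  have hb : 0 < b := ha.trans hab
  have hba : 0 < b - a := sub_pos.2 hab
  refine ⟨2 ^ (p - 1) * ((b - a) + b / a * (b - a) ^ p), by positivity, fun u hu ↦ ?_⟩
  change ContDiffOn ℝ 1 u (closure (annulus a b)) at hu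
  change ∫ q in annulus a b, |u q| ^ p ≤ _ * (_ + ∫ q in annulus a b, ‖fderiv ℝ u q‖ ^ p)
  obtain ⟨M, hM⟩ :=
    hu.bddAbove_norm_fderiv isCompact_closure_annulus isOpen_annulus subset_closure
  have hp0 : 0 ≤ p := by linarith
  have hU := integrableOn_polar_of_continuousOn ha.le hab
    (hu.continuousOn.abs.rpow_const fun _ _ ↦ Or.inr hp0)
  have hDu := integrableOn_polar_of_norm_le ha.le hb.le (M := M ^ p)
    ((measurable_fderiv ℝ u).norm.pow_const p).stronglyMeasurable fun q hq ↦ by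
      rw [norm_of_nonneg (by positivity)]
      exact rpow_le_rpow (norm_nonneg _) (hM ⟨q, hq, rfl⟩) hp0
  have hDuθ := hDu.setIntegral_prod_right (μ := volume) (ν := volume)
  have hbdry : IntegrableOn (fun θ ↦ |u (b * cos θ, b * sin θ)| ^ p * b) (Ioo (-π) π) :=
    (((hu.continuousOn.comp_continuous (by fun_prop) fun θ ↦
      polar_mem_closure_annulus ha.le hab ⟨hab.le, le_rfl⟩ θ).abs.rpow_const fun _ ↦
        Or.inr hp0).mul continuous_const).integrableOn_Icc.mono_set Ioo_subset_Icc_self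
  rw [setIntegral_annulus_eq_integral_integral_polar ha.le hb.le hU,
    setIntegral_annulus_eq_integral_integral_polar ha.le hb.le hDu,
    ← setIntegral_Ioo_neg_pi_pi_polar_eq_intervalIntegral (fun q ↦ |u q| ^ p * b),
    ← integral_add hbdry hDuθ, ← integral_const_mul]
  refine integral_mono_of_nonneg (.of_forall fun θ ↦ ?_) ((hbdry.add hDuθ).const_mul _)
    (.of_forall (setIntegral_mul_abs_rpow_polar_le ha hab hp hu fun q hq ↦ hM ⟨q, hq, rfl⟩))
  exact setIntegral_nonneg measurableSet_Ioo fun r hr ↦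
    smul_nonneg (ha.trans hr.1).le (rpow_nonneg (abs_nonneg _) p)
end
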